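/- arXiv:2010.06295 — 7 statements merged into one kernel-verified Lean document; each statement's English description precedes it below -/
import Mathlib

section
/- The sum of reciprocals of all positive integers whose decimal representation contains no digit 9 converges (Kempner's theorem). -/
/-!
Group the numbers avoiding the digit `c` in base `b` by their number of digits `k`. There are at
most `(b - 1) ^ k` of them, since each digit has only `b - 1` admissible values, and each is at
least `b ^ (k - 1)`. So the `k`-th group contributes at most `b * ((b - 1) / b) ^ k`, a convergent
geometric series.
-/

open Finset

namespace Nat

variable {b c k n : ℕ}

def digitFreeOfLength (b c k : ℕ) : Finset ℕ :=
  {n ∈ range (b ^ k) | c ∉ b.digits n ∧ (b.digits n).length = k}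

lemma mem_digitFreeOfLength (hb : 1 < b) :
    n ∈ digitFreeOfLength b c k ↔ c ∉ b.digits n ∧ (b.digits n).length = k := by
  simp only [digitFreeOfLength, mem_filter, mem_range, and_iff_right_iff_imp]
  rintro ⟨-, rfl⟩
  exact lt_base_pow_length_digits hb

lemma digitFreeOfLength_succ_subset (hb : 1 < b) :
    digitFreeOfLength b c (k + 1) ⊆
      (digitFreeOfLength b c k ×ˢ (range b).erase c).image fun p => b * p.1 + p.2 := by
  intro n hn
  rw [mem_digitFreeOfLength hb] at hn
  obtain ⟨hc, hlen⟩ := hn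
  have hn : 0 < n := pos_of_ne_zero fun h => by simp [h] at hlen
  rw [digits_def' hb hn, List.mem_cons, not_or] at hc
  rw [digits_def' hb hn, List.length_cons, add_left_inj] at hlen
  refine mem_image.2 ⟨(n / b, n % b), ?_, div_add_mod n b⟩
  simp only [mem_product, mem_digitFreeOfLength hb, mem_erase, mem_range]
  exact ⟨⟨hc.2, hlen⟩, Ne.symm hc.1, mod_lt n (by omega)⟩

lemma card_digitFreeOfLength_le (hb : 1 < b) (hc : c < b) :
    #(digitFreeOfLength b c k) ≤ (b - 1) ^ k := by
  induction k with
  | zero =>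
    refine (card_le_card fun n hn => ?_).trans_eq (card_singleton 0)
    simp only [digitFreeOfLength, pow_zero, mem_filter, mem_range, lt_one_iff] at hn
    exact mem_singleton.2 hn.1
  | succ k ih =>
    calc #(digitFreeOfLength b c (k + 1))
        ≤ #(digitFreeOfLength b c k ×ˢ (range b).erase c) :=
          (card_le_card (digitFreeOfLength_succ_subset hb)).trans Finset.card_image_le
      _ = #(digitFreeOfLength b c k) * (b - 1) := by
          rw [card_product, card_erase_of_mem (mem_range.2 hc), card_range]
      _ ≤ (b - 1) ^ (k + 1) := by
          rw [pow_succ]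
          exact Nat.mul_le_mul_right _ ih

-- For `k = 0` the only element is `0`, covered by `1 / 0 = 0`.
lemma one_div_le_of_mem_digitFreeOfLength (hb : 1 < b) (hn : n ∈ digitFreeOfLength b c k) :
    (1 : ℝ) / n ≤ b / b ^ k := by
  rcases eq_or_ne n 0 with rfl | hn0
  · simp only [cast_zero, div_zero]
    positivity
  have hlen := ((mem_digitFreeOfLength hb).1 hn).2
  have hpow : (b : ℝ) ^ k ≤ b * n := by
    exact_mod_cast hlen ▸ base_pow_length_digits_le b n hb hn0
  rw [div_le_div_iff₀ (by positivity) (by positivity)]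
  linarith

lemma sum_one_div_digitFreeOfLength_le (hb : 1 < b) (hc : c < b) :
    ∑ n ∈ digitFreeOfLength b c k, (1 : ℝ) / n ≤ b * ((b - 1) / b) ^ k := by
  have hcard : (#(digitFreeOfLength b c k) : ℝ) ≤ (b - 1) ^ k := by
    rw [← cast_one, ← cast_sub hb.le]
    exact_mod_cast card_digitFreeOfLength_le hb hc
  calc ∑ n ∈ digitFreeOfLength b c k, (1 : ℝ) / n
      ≤ #(digitFreeOfLength b c k) * ((b : ℝ) / b ^ k) :=
        (sum_le_card_nsmul _ _ _ fun n hn => one_div_le_of_mem_digitFreeOfLength hb hn).trans_eq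
          (nsmul_eq_mul _ _)
    _ ≤ (b - 1) ^ k * ((b : ℝ) / b ^ k) := by gcongr
    _ = b * ((b - 1) / b) ^ k := by rw [div_pow]; ring

theorem summable_one_div_of_notMem_digits (hb : 1 < b) (hc : c < b) :
    Summable fun a : {n : ℕ // 0 < n ∧ c ∉ b.digits n} => (1 : ℝ) / (a : ℕ) := by
  classical
  set A : Set ℕ := {n | 0 < n ∧ c ∉ b.digits n}
  set r : ℝ := (b - 1) / b
  have hr0 : 0 ≤ r := div_nonneg (by simp only [sub_nonneg, one_le_cast]; omega) (by positivity)
  have hr1 : r < 1 := by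
    rw [div_lt_one (by positivity)]
    linarith
  have hgeom : Summable fun k => (b : ℝ) * r ^ k :=
    (summable_geometric_of_lt_one hr0 hr1).mul_left _
  refine summable_subtype_iff_indicator (f := fun n : ℕ => (1 : ℝ) / n) (s := A) |>.2 <|
    summable_of_sum_le (c := ∑' k, (b : ℝ) * r ^ k)
      (Set.indicator_nonneg fun _ _ => by positivity) fun u => ?_
  set s := {n ∈ u | n ∈ A}
  set lengths := s.image (b.digits · |>.length)
  have hfiber (k : ℕ) : {n ∈ s | (b.digits n).length = k} ⊆ digitFreeOfLength b c k := by
    intro n hn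
    simp only [s, A, mem_filter, Set.mem_ofPred_eq] at hn
    exact (mem_digitFreeOfLength hb).2 ⟨hn.1.2.2, hn.2⟩
  calc ∑ n ∈ u, A.indicator (fun n : ℕ => (1 : ℝ) / n) n
      = ∑ n ∈ s, (1 : ℝ) / n := sum_indicator_eq_sum_filter ..
    _ = ∑ k ∈ lengths, ∑ n ∈ s with (b.digits n).length = k, (1 : ℝ) / n :=
        (sum_fiberwise_of_maps_to (fun _ hn => mem_image_of_mem _ hn) _).symm
    _ ≤ ∑ k ∈ lengths, ∑ n ∈ digitFreeOfLength b c k, (1 : ℝ) / n :=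
        sum_le_sum fun k _ => sum_le_sum_of_subset_of_nonneg (hfiber k) fun _ _ _ => by positivity
    _ ≤ ∑ k ∈ lengths, (b : ℝ) * r ^ k :=
        sum_le_sum fun _ _ => sum_one_div_digitFreeOfLength_le hb hc
    _ ≤ ∑' k, (b : ℝ) * r ^ k := hgeom.sum_le_tsum _ fun _ _ => by positivity

end Nat

/-- Kempner's theorem: the sum of reciprocals of positive integers whose
decimal representation contains no digit 9 converges. -/
theorem kempner_no_nine :
    Summable (fun a : {n : ℕ // 0 < n ∧ 9 ∉ Nat.digits 10 n} => (1 : ℝ) / (a : ℕ)) :=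
  Nat.summable_one_div_of_notMem_digits (by norm_num) (by norm_num)
end

section
/- For any base g ≥ 2 and any digit u ∈ {0,...,g-1}, the sum of reciprocals of positive integers whose base-g representation omits the digit u converges. -/
/-! Group the integers by their number of base-`g` digits. Among the integers with `m + 1` digits
at most `(g - 1) ^ (m + 1)` avoid the digit `u`, and each of them is at least `g ^ m`, so the block
contributes at most `(g - 1) * ((g - 1) / g) ^ m`: the blocks are dominated by a convergent
geometric series. -/

open Finset

theorem Finset.sum_range_pow_eq_add_sum_sum_Ico {M : Type*} [AddCommMonoid M] (f : ℕ → M)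
    {b : ℕ} (hb : 0 < b) (N : ℕ) :
    ∑ n ∈ range (b ^ N), f n = f 0 + ∑ m ∈ range N, ∑ n ∈ Ico (b ^ m) (b ^ (m + 1)), f n := by
  induction N with
  | zero => simp
  | succ N ih =>
    rw [sum_range_succ, ← add_assoc, ← ih,
      sum_range_add_sum_Ico f (Nat.pow_le_pow_right hb N.le_succ)]

theorem summable_of_sum_Ico_pow_le {b : ℕ} (hb : 1 < b) {f a : ℕ → ℝ} (hf : ∀ n, 0 ≤ f n)
    (ha : Summable a) (hfa : ∀ m, ∑ n ∈ Ico (b ^ m) (b ^ (m + 1)), f n ≤ a m) :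
    Summable f := by
  have ha_nonneg : ∀ m, 0 ≤ a m := fun m => (sum_nonneg fun n _ => hf n).trans (hfa m)
  refine summable_of_sum_range_le hf (c := f 0 + ∑' m, a m) fun N => ?_
  calc ∑ n ∈ range N, f n ≤ ∑ n ∈ range (b ^ N), f n :=
        sum_le_sum_of_subset_of_nonneg (range_subset_range.mpr (Nat.lt_pow_self hb).le)
          fun n _ _ => hf n
    _ = f 0 + ∑ m ∈ range N, ∑ n ∈ Ico (b ^ m) (b ^ (m + 1)), f n :=
        sum_range_pow_eq_add_sum_sum_Ico f (by omega) N
    _ ≤ f 0 + ∑' m, a m := by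
        gcongr
        exact (sum_le_sum fun m _ => hfa m).trans
          (ha.sum_le_tsum _ fun m _ => ha_nonneg m)

namespace Nat

theorem filter_digits_mem_subset_image_ofDigits (b L : ℕ) (s t : Finset ℕ) :
    {n ∈ t | (b.digits n).length = L ∧ ∀ d ∈ b.digits n, d ∈ s} ⊆
      (Fintype.piFinset fun _ : Fin L => s).image fun f => ofDigits b (List.ofFn f) := by
  intro n hn
  obtain ⟨-, rfl, hs⟩ := mem_filter.mp hn
  refine mem_image.mpr ⟨fun i => (b.digits n)[(i : ℕ)], ?_, ?_⟩
  · exact Fintype.mem_piFinset.mpr fun i => hs _ (List.getElem_mem _)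
  · rw [List.ofFn_getElem, ofDigits_digits]

theorem card_filter_digits_mem_le (b L : ℕ) (s t : Finset ℕ) :
    #{n ∈ t | (b.digits n).length = L ∧ ∀ d ∈ b.digits n, d ∈ s} ≤ #s ^ L :=
  (card_le_card (filter_digits_mem_subset_image_ofDigits b L s t)).trans
    (Finset.card_image_le.trans (Fintype.card_piFinset_const s L).le)

theorem card_filter_Ico_pow_notMem_digits_le {b u : ℕ} (hb : 1 < b) (hu : u < b) (m : ℕ) :
    #{n ∈ Ico (b ^ m) (b ^ (m + 1)) | u ∉ b.digits n} ≤ (b - 1) ^ (m + 1) := by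
  calc #{n ∈ Ico (b ^ m) (b ^ (m + 1)) | u ∉ b.digits n}
      ≤ #{n ∈ Ico (b ^ m) (b ^ (m + 1)) |
          (b.digits n).length = m + 1 ∧ ∀ d ∈ b.digits n, d ∈ (range b).erase u} := by
        refine card_le_card (monotone_filter_right _ fun n hn hnu => ⟨?_, fun d hd => ?_⟩)
        · obtain ⟨hlo, hhi⟩ := mem_Ico.mp hn
          have hn0 : n ≠ 0 := (Nat.pow_pos (by omega)).trans_le hlo |>.ne'
          rw [length_digits b n hb hn0, log_eq_of_pow_le_of_lt_pow hlo hhi]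
        · exact mem_erase.mpr ⟨ne_of_mem_of_not_mem hd hnu, mem_range.mpr (digits_lt_base hb hd)⟩
    _ ≤ #((range b).erase u) ^ (m + 1) := card_filter_digits_mem_le b (m + 1) _ _
    _ = (b - 1) ^ (m + 1) := by rw [card_erase_of_mem (mem_range.mpr hu), card_range]

end Nat

theorem sum_Ico_pow_indicator_notMem_digits_le {g u : ℕ} (hg : 1 < g) (hu : u < g) (m : ℕ) :
    ∑ n ∈ Ico (g ^ m) (g ^ (m + 1)),
        {n : ℕ | 0 < n ∧ u ∉ g.digits n}.indicator (fun n => (1 : ℝ) / n) n ≤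
      (g - 1 : ℕ) * (((g - 1 : ℕ) : ℝ) / g) ^ m := by
  rw [sum_indicator_eq_sum_filter]
  calc ∑ n ∈ Ico (g ^ m) (g ^ (m + 1)) with n ∈ {n : ℕ | 0 < n ∧ u ∉ g.digits n}, (1 : ℝ) / n
      ≤ #{n ∈ Ico (g ^ m) (g ^ (m + 1)) | n ∈ {n : ℕ | 0 < n ∧ u ∉ g.digits n}} •
          ((1 : ℝ) / g ^ m) := by
        refine sum_le_card_nsmul _ _ _ fun n hn => ?_
        have hn : g ^ m ≤ n := (mem_Ico.mp (mem_filter.mp hn).1).1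
        gcongr
        exact_mod_cast hn
    _ ≤ (g - 1) ^ (m + 1) • ((1 : ℝ) / g ^ m) := by
        gcongr
        exact (card_le_card (monotone_filter_right _ fun n _ h => h.2)).trans
          (Nat.card_filter_Ico_pow_notMem_digits_le hg hu m)
    _ = (g - 1 : ℕ) * (((g - 1 : ℕ) : ℝ) / g) ^ m := by
        have : (g : ℝ) ≠ 0 := by positivity
        rw [nsmul_eq_mul, div_pow]
        field_simp
        push_cast
        ring

/-- For any base g ≥ 2 and digit u < g, the sum of reciprocals of positive integers
whose base-g representation omits the digit u converges. -/
theorem kempner_base_g (g u : ℕ) (hg : 2 ≤ g) (hu : u < g) :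
    Summable (fun a : {n : ℕ // 0 < n ∧ u ∉ Nat.digits g n} => (1 : ℝ) / (a : ℕ)) := by
  have hratio : ((g - 1 : ℕ) : ℝ) / g < 1 :=
    (div_lt_one (by positivity)).mpr (by exact_mod_cast Nat.sub_lt (by omega) one_pos)
  refine summable_subtype_iff_indicator.mpr
    (summable_of_sum_Ico_pow_le hg (fun n => ?_)
      ((summable_geometric_of_lt_one (by positivity) hratio).mul_left _)
      (sum_Ico_pow_indicator_notMem_digits_le hg hu))
  exact Set.indicator_nonneg (fun n _ => by positivity) n
end

section
/- For g ≥ 2 and a fixed forbidden digit u ∈ [0,g-1], the series ∑_{a ∈ A_{g,u}} a^{-σ} converges for every real σ > log(g-1)/log g. -/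
/-!
At most `(g - 1) ^ (m + 1)` numbers in `[g ^ m, g ^ (m + 1))` avoid the digit `u`, as each of
their `m + 1` digits has at most `g - 1` admissible values, and each such number contributes at
most `g ^ (-m σ)`. So the block contributes at most `(g - 1) * ((g - 1) * g ^ (-σ)) ^ m`, a
geometric series whose ratio is `< 1` exactly when `σ > log (g - 1) / log g`.
-/

open Finset

namespace Nat

variable {g u : ℕ}

theorem card_filter_digits_notMem_Ico_pow_le (hg : 1 < g) (hu : u < g) (m : ℕ) :
    #{n ∈ Ico (g ^ m) (g ^ (m + 1)) | u ∉ g.digits n} ≤ (g - 1) ^ (m + 1) := by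
  induction m with
  | zero => simpa using card_filter_le (Ico 1 g) _
  | succ m ih =>
    -- split off the last digit: `n = n % g + g * (n / g)`
    have hsub : {n ∈ Ico (g ^ (m + 1)) (g ^ (m + 2)) | u ∉ g.digits n} ⊆
        (((range g).erase u) ×ˢ {n ∈ Ico (g ^ m) (g ^ (m + 1)) | u ∉ g.digits n}).image
          fun p => p.1 + g * p.2 := by
      intro n hn
      obtain ⟨⟨hlo, hhi⟩, hd⟩ : (g ^ (m + 1) ≤ n ∧ n < g ^ (m + 2)) ∧ u ∉ g.digits n := by
        simpa using hn
      rw [digits_def' hg (lt_of_lt_of_le (pow_pos (by omega) _) hlo), List.mem_cons,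
        not_or] at hd
      refine mem_image.mpr ⟨(n % g, n / g), ?_, mod_add_div n g⟩
      simp only [mem_product, mem_erase, mem_range, mem_filter, mem_Ico]
      refine ⟨⟨Ne.symm hd.1, mod_lt _ (by omega)⟩, ⟨?_, ?_⟩, hd.2⟩
      · rwa [le_div_iff_mul_le (by omega), ← pow_succ]
      · rwa [div_lt_iff_lt_mul (by omega), ← pow_succ]
    calc _ ≤ _ := card_le_card hsub
      _ ≤ _ := Finset.card_image_le
      _ ≤ (g - 1) * (g - 1) ^ (m + 1) := by
        rw [Finset.card_product, card_erase_of_mem (mem_range.mpr hu), card_range]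
        exact Nat.mul_le_mul_left _ ih
      _ = (g - 1) ^ (m + 2) := by ring

theorem sum_filter_digits_notMem_Ico_pow_rpow_le (hg : 1 < g) (hu : u < g) {σ : ℝ}
    (hσ : 0 ≤ σ) (m : ℕ) :
    ∑ n ∈ Ico (g ^ m) (g ^ (m + 1)) with u ∉ g.digits n, (n : ℝ) ^ (-σ) ≤
      (g - 1) * ((g - 1) * (g : ℝ) ^ (-σ)) ^ m := by
  have hterm : ∀ n ∈ {n ∈ Ico (g ^ m) (g ^ (m + 1)) | u ∉ g.digits n},
      (n : ℝ) ^ (-σ) ≤ ((g : ℝ) ^ (-σ)) ^ m := by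
    intro n hn
    rw [Real.rpow_pow_comm (cast_nonneg g)]
    exact Real.rpow_le_rpow_of_nonpos (by positivity)
      (by exact_mod_cast (mem_Ico.mp (mem_filter.mp hn).1).1) (neg_nonpos.mpr hσ)
  calc _ ≤ _ • _ := sum_le_card_nsmul _ _ _ hterm
    _ ≤ (((g - 1) ^ (m + 1) : ℕ) : ℝ) * ((g : ℝ) ^ (-σ)) ^ m := by
      rw [nsmul_eq_mul]
      gcongr
      exact_mod_cast card_filter_digits_notMem_Ico_pow_le hg hu m
    _ = _ := by rw [mul_pow]; push_cast [cast_sub hg.le]; ring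

theorem sum_range_pow_indicator_digits_notMem_rpow_le (hg : 1 < g) (hu : u < g) {σ : ℝ}
    (hσ : 0 ≤ σ) (N : ℕ) :
    ∑ n ∈ range (g ^ N), {n | 0 < n ∧ u ∉ g.digits n}.indicator (fun n : ℕ => (n : ℝ) ^ (-σ)) n ≤
      (g - 1) * ∑ m ∈ range N, ((g - 1) * (g : ℝ) ^ (-σ)) ^ m := by
  induction N with
  | zero => simp
  | succ N ih =>
    have hblock : {n ∈ Ico (g ^ N) (g ^ (N + 1)) | n ∈ {n | 0 < n ∧ u ∉ g.digits n}} =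
        {n ∈ Ico (g ^ N) (g ^ (N + 1)) | u ∉ g.digits n} :=
      filter_congr fun n hn => by
        simpa using fun _ => lt_of_lt_of_le (pow_pos (by omega) _) (mem_Ico.mp hn).1
    rw [← sum_range_add_sum_Ico _ (pow_le_pow_right₀ hg.le (le_add_right N 1)),
      sum_indicator_eq_sum_filter (Ico _ _), hblock, sum_range_succ, mul_add]
    exact _root_.add_le_add ih (sum_filter_digits_notMem_Ico_pow_rpow_le hg hu hσ N)

end Nat

theorem Real.sub_one_mul_rpow_neg_lt_one {x σ : ℝ} (hx : 1 < x)
    (hσ : Real.log (x - 1) / Real.log x < σ) : (x - 1) * x ^ (-σ) < 1 := by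
  rw [Real.rpow_neg (by positivity), ← div_eq_mul_inv, div_lt_one (by positivity),
    Real.lt_rpow_iff_log_lt (by linarith) (by linarith)]
  rwa [div_lt_iff₀ (Real.log_pos hx)] at hσ

/-- For g ≥ 2 and forbidden digit u < g, the series ∑ a^{-σ} over integers with no
base-g digit u converges for every real σ > log(g-1)/log g. -/
theorem missing_digit_converges (g u : ℕ) (hg : 2 ≤ g) (hu : u < g) (σ : ℝ)
    (hσ : Real.log (g - 1) / Real.log g < σ) :
    Summable (fun a : {n : ℕ // 0 < n ∧ u ∉ Nat.digits g n} => ((a : ℕ) : ℝ) ^ (-σ)) := by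
  have hgR : (2 : ℝ) ≤ g := by exact_mod_cast hg
  have hσ0 : 0 ≤ σ := ((div_nonneg (Real.log_nonneg (by linarith))
    (Real.log_nonneg (by linarith))).trans_lt hσ).le
  set r := ((g : ℝ) - 1) * (g : ℝ) ^ (-σ)
  have hr0 : 0 ≤ r := mul_nonneg (by linarith) (by positivity)
  have hr1 : r < 1 := Real.sub_one_mul_rpow_neg_lt_one (by linarith) hσ
  have hnonneg : ∀ n, 0 ≤ {n : ℕ | 0 < n ∧ u ∉ Nat.digits g n}.indicator
      (fun n : ℕ => (n : ℝ) ^ (-σ)) n :=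
    Set.indicator_nonneg fun n _ => by positivity
  refine summable_subtype_iff_indicator.mpr <|
    summable_of_sum_range_le (c := (g - 1) / (1 - r)) hnonneg fun N => ?_
  calc _ ≤ ∑ n ∈ range (g ^ N), _ :=
        sum_le_sum_of_subset_of_nonneg (range_subset_range.mpr (Nat.lt_pow_self hg).le)
          fun n _ _ => hnonneg n
    _ ≤ (g - 1) * ∑ m ∈ range N, r ^ m :=
        Nat.sum_range_pow_indicator_digits_notMem_rpow_le hg hu hσ0 N
    _ ≤ (g - 1) * (1 / (1 - r)) := by
        have hgeom := geom_sum_Ico_le_of_lt_one (m := 0) (n := N) hr0 hr1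
        rw [← range_eq_Ico, pow_zero] at hgeom
        exact mul_le_mul_of_nonneg_left hgeom (by linarith)
    _ = (g - 1) / (1 - r) := by ring
end

section
/- The Kempner series ∑_{a ∈ A_{10,9}} a^{-σ} diverges at σ = log 9 / log 10. -/
/-!
Fix a base `b ≥ 3` and `σ = log_b (b - 1)`. For each `k`, the numbers whose base-`b` expansion
is a leading digit `1` followed by `k` digits below `b - 1` avoid the digit `b - 1`; there are
`(b - 1)^k` of them and each is below `b^(k+1)`, so together they contribute at least
`(b - 1)^k · (b^(k+1))^(-σ) = (b - 1)^k / (b - 1)^(k+1) = 1 / (b - 1)` to the series. These blocks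
are disjoint for distinct `k`, so the series diverges.
-/

open Real Function

theorem pow_rpow_logb {b c : ℝ} (hb : 0 < b) (hb1 : b ≠ 1) (hc : 0 < c) (m : ℕ) :
    (b ^ m) ^ logb b c = c ^ m := by
  rw [← rpow_natCast, ← rpow_mul hb.le, mul_comm, rpow_mul hb.le, rpow_logb hb hb1 hc,
    rpow_natCast]

namespace Kempner

variable {b : ℕ}

def encode (b : ℕ) (x : Σ k, Fin k → Fin (b - 1)) : ℕ :=
  Nat.ofDigits b (List.ofFn (fun i => (x.2 i : ℕ)) ++ [1])

theorem digits_encode (hb : 3 ≤ b) (x : Σ k, Fin k → Fin (b - 1)) :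
    b.digits (encode b x) = List.ofFn (fun i => (x.2 i : ℕ)) ++ [1] := by
  refine Nat.digits_ofDigits b (by omega) _ (fun d hd => ?_) (fun _ => by simp)
  rcases List.mem_append.mp hd with hd | hd
  · obtain ⟨i, rfl⟩ := List.mem_ofFn.mp hd
    have := (x.2 i).isLt
    omega
  · rw [List.mem_singleton.mp hd]
    omega

theorem encode_injective (hb : 3 ≤ b) : Injective (encode b) := by
  rintro ⟨k, d⟩ ⟨k', d'⟩ h
  have h := congrArg b.digits h
  rw [digits_encode hb, digits_encode hb, List.append_cancel_right_eq, List.ofFn_inj'] at h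
  obtain ⟨rfl, h⟩ := Sigma.mk.inj_iff.mp h
  have h := congrFun (eq_of_heq h)
  exact Sigma.ext rfl (heq_of_eq (funext fun i => Fin.ext (h i)))

theorem encode_pos (hb : 3 ≤ b) (x : Σ k, Fin k → Fin (b - 1)) : 0 < encode b x := by
  refine Nat.pos_of_ne_zero fun h => ?_
  have := digits_encode hb x
  simp [h] at this

theorem pred_notMem_digits_encode (hb : 3 ≤ b) (x : Σ k, Fin k → Fin (b - 1)) :
    b - 1 ∉ b.digits (encode b x) := by
  rw [digits_encode hb, List.mem_append, List.mem_ofFn, List.mem_singleton]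
  rintro (⟨i, hi⟩ | h)
  · exact (x.2 i).isLt.ne hi
  · omega

theorem encode_lt (hb : 3 ≤ b) (x : Σ k, Fin k → Fin (b - 1)) : encode b x < b ^ (x.1 + 1) := by
  simpa [digits_encode hb] using Nat.lt_base_pow_length_digits (m := encode b x) (by omega : 1 < b)

theorem inv_le_sum_encode_rpow_neg (hb : 3 ≤ b) (k : ℕ) :
    ((b - 1 : ℕ) : ℝ)⁻¹ ≤
      ∑ d : Fin k → Fin (b - 1), (encode b ⟨k, d⟩ : ℝ) ^ (-logb b ((b - 1 : ℕ) : ℝ)) := by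
  set c : ℝ := ((b - 1 : ℕ) : ℝ)
  have hc : 1 < c := by simp only [c]; exact_mod_cast (by omega : 1 < b - 1)
  have hb1 : (1 : ℝ) < b := by exact_mod_cast (by omega : 1 < b)
  have term_le (d : Fin k → Fin (b - 1)) :
      (c ^ (k + 1))⁻¹ ≤ (encode b ⟨k, d⟩ : ℝ) ^ (-logb b c) :=
    calc (c ^ (k + 1))⁻¹ = ((b : ℝ) ^ (k + 1)) ^ (-logb b c) := by
          rw [rpow_neg (by positivity), pow_rpow_logb (by positivity) hb1.ne' (by positivity)]
      _ ≤ (encode b ⟨k, d⟩ : ℝ) ^ (-logb b c) :=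
          rpow_le_rpow_of_nonpos (by exact_mod_cast encode_pos hb _)
            (by exact_mod_cast (encode_lt hb _).le)
            (neg_nonpos.mpr (logb_nonneg hb1 hc.le))
  calc c⁻¹ = ∑ _d : Fin k → Fin (b - 1), (c ^ (k + 1))⁻¹ := by
        simp only [Finset.sum_const, Finset.card_univ, Fintype.card_fun, Fintype.card_fin,
          nsmul_eq_mul, Nat.cast_pow]
        field_simp
        ring
    _ ≤ _ := Finset.sum_le_sum fun d _ => term_le d

theorem not_summable_rpow_neg_logb_of_pred_notMem_digits (hb : 3 ≤ b) :
    ¬ Summable (fun a : {n : ℕ // 0 < n ∧ b - 1 ∉ b.digits n} =>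
      ((a : ℕ) : ℝ) ^ (-logb b ((b - 1 : ℕ) : ℝ))) := by
  intro hs
  let e (x : Σ k, Fin k → Fin (b - 1)) : {n : ℕ // 0 < n ∧ b - 1 ∉ b.digits n} :=
    ⟨encode b x, encode_pos hb x, pred_notMem_digits_encode hb x⟩
  have he : Injective e := fun x y h => encode_injective hb (congrArg Subtype.val h)
  have blocks_tendsto_zero := ((hs.comp_injective he).sigma).tendsto_atTop_zero
  simp only [comp_apply, tsum_fintype, e] at blocks_tendsto_zero
  have blocks_ge := ge_of_tendsto' blocks_tendsto_zero (inv_le_sum_encode_rpow_neg hb)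
  have : (0 : ℝ) < ((b - 1 : ℕ) : ℝ)⁻¹ := inv_pos.mpr (by exact_mod_cast (by omega : 0 < b - 1))
  linarith

end Kempner

/-- The Kempner series ∑ a^{-σ} over positive integers with no decimal digit 9
diverges at σ = log 9 / log 10. -/
theorem kempner_diverges_critical :
    ¬ Summable (fun a : {n : ℕ // 0 < n ∧ 9 ∉ Nat.digits 10 n} =>
      ((a : ℕ) : ℝ) ^ (-(Real.log 9 / Real.log 10))) := by
  simpa [logb] using
    Kempner.not_summable_rpow_neg_logb_of_pred_notMem_digits (b := 10) (by norm_num)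
end

section
/- Let g ≥ 2 and (U_i)_{i∈ℕ} be proper subsets of [0,g-1] such that card{i < m : |U_i| = k} = α_k m + ε_k(m) with ε_k(m)/m → 0 for each k ∈ [0,g-1], for nonnegative reals α_0,...,α_{g-1}. Then the series ∑_{a ∈ A_{g,𝒰}} a^{-σ} converges for every real σ > (1/log g) ∑_{k=0}^{g-1} α_k log(g-k). -/
/-!
Group the elements of `A_{g,𝒰}` by their number `m` of digits. There are at most
`P m = ∏_{i<m} (g - |U_i|)` of them and each is at least `g^(m-1)`, so the series is dominated
by `∑ₘ P m · g^((1-m)σ)`. Sorting the factors of `P m` by `|U_i| = k`, the density hypothesis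
gives `log P m = c m + o(m)` with `c = ∑ₖ αₖ log (g-k)`, so the dominating series is eventually
geometric as soon as `c < σ log g`.
-/

open Filter Topology Finset Real

theorem summable_of_fiberwise_sum_le {ι : Type*} {f : ι → ℝ} (hf : 0 ≤ f) (p : ι → ℕ)
    {b : ℕ → ℝ} (hb : Summable b)
    (h : ∀ m (s : Finset ι), (∀ i ∈ s, p i = m) → ∑ i ∈ s, f i ≤ b m) :
    Summable f := by
  classical
  have hb0 : 0 ≤ b := fun m => by simpa using h m ∅
  refine summable_of_sum_le (c := ∑' m, b m) hf fun u => ?_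
  calc ∑ i ∈ u, f i = ∑ m ∈ u.image p, ∑ i ∈ u with p i = m, f i :=
        (sum_fiberwise_of_maps_to (fun i hi => mem_image_of_mem p hi) f).symm
    _ ≤ ∑ m ∈ u.image p, b m := sum_le_sum fun m _ => h m _ fun i hi => (mem_filter.1 hi).2
    _ ≤ ∑' m, b m := hb.sum_le_tsum _ fun m _ => hb0 m

theorem summable_mul_pow_of_tendsto_log_div {u : ℕ → ℝ} (hu : ∀ m, 0 < u m) {c : ℝ}
    (hlim : Tendsto (fun m : ℕ => log (u m) / m) atTop (𝓝 c)) {x : ℝ} (hx : 0 < x)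
    (hcx : c + log x < 0) : Summable fun m => u m * x ^ m := by
  set δ := -(c + log x) / 2 with hδ
  have hδ0 : 0 < δ := by linarith
  refine (summable_geometric_of_lt_one (exp_pos (-δ)).le (exp_lt_one_iff.2 (by linarith)))
    |>.of_norm_bounded_eventually_nat ?_
  filter_upwards [hlim.eventually_lt_const (show c < c + δ by linarith),
    eventually_gt_atTop 0] with m hlog hm
  rw [div_lt_iff₀ (by exact_mod_cast hm)] at hlog
  rw [norm_of_nonneg (by have := hu m; positivity)]
  calc u m * x ^ m = exp (log (u m) + m * log x) := by
        rw [exp_add, exp_nat_mul, exp_log (hu m), exp_log hx]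
    _ ≤ exp (m * -δ) := exp_le_exp.2 (by nlinarith)
    _ = exp (-δ) ^ m := exp_nat_mul _ _

theorem sum_comp_eq_sum_card_filter_mul {g : ℕ} {κ : ℕ → ℕ} (hκ : ∀ i, κ i < g) (F : ℕ → ℝ)
    (m : ℕ) :
    ∑ i ∈ range m, F (κ i) = ∑ k ∈ range g, (#{i ∈ range m | κ i = k} : ℝ) * F k := by
  rw [← sum_fiberwise_of_maps_to' (t := range g) (fun i _ => mem_range.2 (hκ i))]
  simp only [sum_const, nsmul_eq_mul]

theorem tendsto_sum_comp_div_of_density {g : ℕ} {κ : ℕ → ℕ} (hκ : ∀ i, κ i < g) {α : ℕ → ℝ}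
    (hε : ∀ k < g, Tendsto (fun m : ℕ => ((#{i ∈ range m | κ i = k} : ℝ) - α k * m) / m)
      atTop (𝓝 0))
    (F : ℕ → ℝ) :
    Tendsto (fun m : ℕ => (∑ i ∈ range m, F (κ i)) / m) atTop
      (𝓝 (∑ k ∈ range g, α k * F k)) := by
  have herr : Tendsto (fun m : ℕ => ∑ k ∈ range g,
      ((#{i ∈ range m | κ i = k} : ℝ) - α k * m) / m * F k) atTop (𝓝 0) := by
    simpa using tendsto_finsetSum _ fun k hk => (hε k (mem_range.1 hk)).mul_const (F k)
  refine (zero_add (∑ k ∈ range g, α k * F k) ▸ herr.add_const _).congr' ?_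
  filter_upwards [eventually_gt_atTop 0] with m hm
  have hm' : (m : ℝ) ≠ 0 := by exact_mod_cast hm.ne'
  rw [sum_comp_eq_sum_card_filter_mul hκ, sum_div, ← sum_add_distrib]
  refine sum_congr rfl fun k _ => ?_
  field_simp
  ring

theorem card_le_prod_card_of_digits_mem (g m : ℕ) (D : ℕ → Finset ℕ) {s : Finset ℕ}
    (hlen : ∀ n ∈ s, (Nat.digits g n).length = m)
    (hD : ∀ n ∈ s, ∀ i < m, (Nat.digits g n).getD i 0 ∈ D i) :
    #s ≤ ∏ i ∈ range m, #(D i) := by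
  rw [← card_pi]
  refine card_le_card_of_injOn (fun n i _ => (Nat.digits g n).getD i 0)
    (fun n hn => mem_pi.2 fun i hi => hD n hn i (mem_range.1 hi)) ?_
  intro n₁ h₁ n₂ h₂ h
  apply Nat.digits.injective g
  refine List.ext_getElem (by rw [hlen n₁ h₁, hlen n₂ h₂]) fun i hi₁ hi₂ => ?_
  have := congr_fun (congr_fun h i) (mem_range.2 (hlen n₁ h₁ ▸ hi₁))
  simpa [List.getD_eq_getElem, hi₁, hi₂] using this

theorem rpow_neg_le_mul_pow_length_digits {g n : ℕ} (hg : 1 < g) (hn : n ≠ 0) {σ : ℝ}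
    (hσ : 0 ≤ σ) :
    (n : ℝ) ^ (-σ) ≤ (g : ℝ) ^ σ * ((g : ℝ) ^ (-σ)) ^ (Nat.digits g n).length := by
  have hg0 : (0 : ℝ) < g := by positivity
  have hn0 : (0 : ℝ) < n := by positivity
  have hpow : ((g : ℝ) ^ (Nat.digits g n).length) ≤ g * n := by
    exact_mod_cast Nat.base_pow_length_digits_le g n hg hn
  calc (n : ℝ) ^ (-σ) = (g : ℝ) ^ σ * (g * n : ℝ) ^ (-σ) := by
        rw [mul_rpow hg0.le hn0.le, ← mul_assoc, ← rpow_add hg0, add_neg_cancel, rpow_zero,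
          one_mul]
    _ ≤ (g : ℝ) ^ σ * ((g : ℝ) ^ (Nat.digits g n).length) ^ (-σ) :=
        mul_le_mul_of_nonneg_left (rpow_le_rpow_of_nonpos (by positivity) hpow (neg_nonpos.2 hσ))
          (by positivity)
    _ = _ := by rw [rpow_pow_comm hg0.le]

theorem sum_rpow_neg_le_of_digits_notMem {g m : ℕ} (hg : 1 < g) (U : ℕ → Finset ℕ) {σ : ℝ}
    (hσ : 0 ≤ σ) {s : Finset ℕ}
    (hs : ∀ n ∈ s, n ≠ 0 ∧ (Nat.digits g n).length = m ∧
      ∀ i < (Nat.digits g n).length, (Nat.digits g n).getD i 0 ∉ U i) :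
    ∑ n ∈ s, (n : ℝ) ^ (-σ) ≤
      (∏ i ∈ range m, #(range g \ U i) : ℕ) * ((g : ℝ) ^ σ * ((g : ℝ) ^ (-σ)) ^ m) := by
  have hcard : #s ≤ ∏ i ∈ range m, #(range g \ U i) := by
    refine card_le_prod_card_of_digits_mem g m _ (fun n hn => (hs n hn).2.1) fun n hn i hi => ?_
    obtain ⟨-, hlen, hU⟩ := hs n hn
    have hi' : i < (Nat.digits g n).length := hlen ▸ hi
    refine mem_sdiff.2 ⟨mem_range.2 ?_, hU i hi'⟩
    rw [List.getD_eq_getElem _ _ hi']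
    exact Nat.digits_lt_base hg (List.getElem_mem _)
  calc ∑ n ∈ s, (n : ℝ) ^ (-σ) ≤ ∑ _n ∈ s, (g : ℝ) ^ σ * ((g : ℝ) ^ (-σ)) ^ m :=
        sum_le_sum fun n hn => (hs n hn).2.1 ▸ rpow_neg_le_mul_pow_length_digits hg (hs n hn).1 hσ
    _ ≤ _ := by
        rw [sum_const, nsmul_eq_mul]
        gcongr

theorem tendsto_log_prod_card_sdiff_div {g : ℕ} {U : ℕ → Finset ℕ}
    (hU : ∀ i, U i ⊂ range g) {α : ℕ → ℝ}
    (hε : ∀ k < g, Tendsto (fun m : ℕ => ((#{i ∈ range m | #(U i) = k} : ℝ) - α k * m) / m)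
      atTop (𝓝 0)) :
    Tendsto (fun m : ℕ => log (∏ i ∈ range m, #(range g \ U i) : ℕ) / m) atTop
      (𝓝 (∑ k ∈ range g, α k * log (g - k))) := by
  have hcard (i : ℕ) : #(U i) < g := by simpa using card_lt_card (hU i)
  refine (tendsto_sum_comp_div_of_density hcard hε fun k => log (g - k)).congr fun m => ?_
  have hpos (i : ℕ) : 0 < #(range g \ U i) := card_pos.2 (sdiff_nonempty.2 (hU i).2)
  rw [Nat.cast_prod, log_prod fun i _ => by exact_mod_cast (hpos i).ne']
  congr 1
  refine sum_congr rfl fun i _ => ?_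
  rw [card_sdiff_of_subset (hU i).1, card_range, Nat.cast_sub (hcard i).le]

theorem variable_missing_digits_converges_general (g : ℕ) (hg : 2 ≤ g)
    (U : ℕ → Finset ℕ) (hU : ∀ i, U i ⊂ Finset.range g)
    (α : ℕ → ℝ)
    (hε : ∀ k < g, Filter.Tendsto
      (fun m : ℕ =>
        (((Finset.range m).filter (fun i => (U i).card = k)).card - α k * m) / m)
      Filter.atTop (nhds 0))
    (σ : ℝ)
    (hσ : (∑ k ∈ Finset.range g, α k * Real.log (g - k)) / Real.log g < σ) :
    Summable (fun a : {n : ℕ // 0 < n ∧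
        ∀ i < (Nat.digits g n).length, (Nat.digits g n).getD i 0 ∉ U i} =>
      ((a : ℕ) : ℝ) ^ (-σ)) := by
  set P : ℕ → ℕ := fun m => ∏ i ∈ range m, #(range g \ U i)
  have hlim := tendsto_log_prod_card_sdiff_div hU hε
  have hP (m : ℕ) : 0 < P m :=
    prod_pos fun i _ => card_pos.2 (sdiff_nonempty.2 (hU i).2)
  have hlogg : 0 < log g := log_pos (by exact_mod_cast hg)
  have hσ0 : 0 ≤ σ := by
    refine le_trans (div_nonneg ?_ hlogg.le) hσ.le
    exact ge_of_tendsto' hlim fun m => div_nonneg (log_natCast_nonneg _) m.cast_nonneg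
  have hb : Summable fun m => (P m : ℝ) * ((g : ℝ) ^ σ * ((g : ℝ) ^ (-σ)) ^ m) := by
    simp only [mul_left_comm (P _ : ℝ)]
    refine (summable_mul_pow_of_tendsto_log_div (fun m => by exact_mod_cast hP m) hlim
      (by positivity) ?_).mul_left _
    rw [log_rpow (by positivity)]
    linarith [(div_lt_iff₀ hlogg).1 hσ]
  refine summable_of_fiberwise_sum_le (fun a => rpow_nonneg a.1.cast_nonneg _)
    (fun a => (Nat.digits g a).length) hb fun m s hs => ?_
  have hmap := sum_rpow_neg_le_of_digits_notMem hg U hσ0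
    (s := s.map (Function.Embedding.subtype _)) fun n hn => by
      obtain ⟨a, ha, rfl⟩ := mem_map.1 hn
      exact ⟨a.2.1.ne', hs a ha, a.2.2⟩
  rwa [sum_map] at hmap

/-- Convergence half of the variable-digit-restriction theorem: with digit-size
densities α_k (error terms ε_k(m)/m → 0), the series ∑ a^{-σ} over A_{g,𝒰}
converges for every σ > (1/log g) ∑_k α_k log(g-k). -/
theorem variable_missing_digits_converges (g : ℕ) (hg : 2 ≤ g)
    (U : ℕ → Finset ℕ) (hU : ∀ i, U i ⊂ Finset.range g)
    (α : ℕ → ℝ) (hα : ∀ k < g, 0 ≤ α k)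
    (hε : ∀ k < g, Filter.Tendsto
      (fun m : ℕ =>
        (((Finset.range m).filter (fun i => (U i).card = k)).card - α k * m) / m)
      Filter.atTop (nhds 0))
    (σ : ℝ)
    (hσ : (∑ k ∈ Finset.range g, α k * Real.log (g - k)) / Real.log g < σ) :
    Summable (fun a : {n : ℕ // 0 < n ∧
        ∀ i < (Nat.digits g n).length, (Nat.digits g n).getD i 0 ∉ U i} =>
      ((a : ℕ) : ℝ) ^ (-σ)) :=
  variable_missing_digits_converges_general g hg U hU α hε σ hσ
end

section
/- Under the variable-digit-restriction setup with α_k densities and uniformly bounded error terms |ε_k(m)| < β, and with 𝓜 infinite, the series ∑_{a ∈ A_{g,𝒰}} a^{-σ_c} diverges at the critical exponent σ_c = (1/log g) ∑_{k=0}^{g-1} α_k log(g-k). -/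
/-!
For every `m ∈ 𝓜` choose a nonzero digit `d ∉ U_{m-1}`. The `m`-digit numbers with leading
digit `d` and all other digits allowed lie in `A_{g,𝒰}`, are less than `g ^ m`, and number
`∏_{i<m-1} (g - |U_i|) ≥ g⁻¹ ∏_{i<m} (g - |U_i|)`. Grouping the factors by `|U_i| = k` gives
`∏_{i<m} (g - |U_i|) = exp (∑_k N_k(m) log (g - k)) ≥ g ^ (m σ_c) · exp (-β ∑_k log (g - k))`,
so each of these pairwise disjoint blocks contributes at least the constant
`exp (-β ∑_k log (g - k)) / g` to the series, and there are infinitely many of them.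
-/

open Finset Real

theorem not_summable_subtype_of_pairwiseDisjoint {ι α : Type*} {P : α → Prop} {f : α → ℝ}
    (hf : ∀ a, 0 ≤ f a) {S : Set ι} (hS : S.Infinite) {B : ι → Finset α}
    (hBP : ∀ i ∈ S, ∀ a ∈ B i, P a) (hB : S.PairwiseDisjoint B) {c : ℝ} (hc : 0 < c)
    (hc_le : ∀ i ∈ S, c ≤ ∑ a ∈ B i, f a) :
    ¬ Summable (fun a : Subtype P => f a) := by
  classical
  intro hsum
  obtain ⟨n, hn⟩ := exists_nat_gt ((∑' a : Subtype P, f a) / c)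
  obtain ⟨T, hTS, rfl⟩ := hS.exists_subset_card_eq n
  have hTP : ∀ a ∈ T.biUnion B, P a := by
    simp only [mem_biUnion]
    rintro a ⟨i, hi, ha⟩
    exact hBP i (hTS hi) a ha
  have hupper : ∑ a ∈ T.biUnion B, f a ≤ ∑' a : Subtype P, f a := by
    rw [← sum_subtype_of_mem f hTP]
    exact hsum.sum_le_tsum _ fun a _ => hf a
  have hlower : #T * c ≤ ∑ a ∈ T.biUnion B, f a := by
    rw [sum_biUnion (hB.subset hTS), ← nsmul_eq_mul]
    exact card_nsmul_le_sum _ _ _ fun i hi => hc_le i (hTS hi)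
  rw [div_lt_iff₀ hc] at hn
  linarith

theorem le_sum_range_comp_of_le_card_filter {g m : ℕ} {κ : ℕ → ℕ} (hκ : ∀ i < m, κ i < g)
    {φ α : ℕ → ℝ} {β : ℝ} (hφ : ∀ k < g, 0 ≤ φ k)
    (hcount : ∀ k < g, α k * m - β ≤ #{i ∈ range m | κ i = k}) :
    m * ∑ k ∈ range g, α k * φ k - β * ∑ k ∈ range g, φ k ≤ ∑ i ∈ range m, φ (κ i) := by
  rw [← sum_fiberwise_of_maps_to' (t := range g) fun i hi => mem_range.2 (hκ i (mem_range.1 hi)),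
    mul_sum, mul_sum, ← sum_sub_distrib]
  refine sum_le_sum fun k hk => ?_
  rw [sum_const, nsmul_eq_mul, mul_left_comm, ← mul_assoc, ← sub_mul]
  exact mul_le_mul_of_nonneg_right (hcount k (mem_range.1 hk)) (hφ k (mem_range.1 hk))

theorem exp_le_prod_range_sub {g m : ℕ} {κ : ℕ → ℕ} (hκ : ∀ i < m, κ i < g) {α : ℕ → ℝ} {β : ℝ}
    (hcount : ∀ k < g, α k * m - β ≤ #{i ∈ range m | κ i = k}) :
    exp (m * ∑ k ∈ range g, α k * log (g - k) - β * ∑ k ∈ range g, log (g - k)) ≤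
      ∏ i ∈ range m, ((g - κ i : ℕ) : ℝ) := by
  have hpos : ∀ i ∈ range m, (0 : ℝ) < (g - κ i : ℕ) := fun i hi =>
    Nat.cast_pos.2 (Nat.sub_pos_of_lt (hκ i (mem_range.1 hi)))
  have hcast : ∀ i ∈ range m, log ((g - κ i : ℕ) : ℝ) = log ((g : ℝ) - κ i) := fun i hi => by
    rw [Nat.cast_sub (hκ i (mem_range.1 hi)).le]
  rw [← exp_log (prod_pos hpos), exp_le_exp, log_prod fun i hi => (hpos i hi).ne',
    sum_congr rfl hcast]
  refine le_sum_range_comp_of_le_card_filter (φ := fun k => log (g - k)) hκ (fun k hk => ?_) hcount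
  have : (k : ℝ) + 1 ≤ g := by exact_mod_cast hk
  exact log_nonneg (by linarith)

theorem exists_ne_zero_notMem_of_ssubset_range {g : ℕ} {V : Finset ℕ} (hV : V ⊂ range g)
    (hne : V ≠ Icc 1 (g - 1)) : ∃ d < g, d ≠ 0 ∧ d ∉ V := by
  by_contra! h
  refine hne (eq_of_subset_of_card_le (fun d hd => ?_) ?_).symm
  · rw [mem_Icc] at hd
    exact h d (by omega) (by omega)
  · have := card_lt_card hV
    rw [card_range] at this
    rw [Nat.card_Icc]
    omega

def HasAllowedDigits (g : ℕ) (U : ℕ → Finset ℕ) (n : ℕ) : Prop :=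
  0 < n ∧ ∀ i < (Nat.digits g n).length, (Nat.digits g n).getD i 0 ∉ U i

/-- Digits are little-endian, so `d` is the leading digit of these `m + 1`-digit numbers. -/
def digitBlock (g : ℕ) (U : ℕ → Finset ℕ) (m d : ℕ) : Finset ℕ :=
  (Fintype.piFinset fun i : Fin m => range g \ U i).image
    fun c => Nat.ofDigits g (List.ofFn c ++ [d])

theorem Nat.digits_ofDigits_ofFn_append {g m d : ℕ} (hg : 1 < g) (hd : d < g) (hd0 : d ≠ 0)
    {c : Fin m → ℕ} (hc : ∀ i, c i < g) :
    Nat.digits g (Nat.ofDigits g (List.ofFn c ++ [d])) = List.ofFn c ++ [d] := by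
  refine Nat.digits_ofDigits g hg _ (fun l hl => ?_) fun _ => by simpa using hd0
  rcases List.mem_append.1 hl with hl | hl
  · obtain ⟨i, rfl⟩ := List.mem_ofFn.1 hl
    exact hc i
  · rwa [List.mem_singleton.1 hl]

section digitBlock

variable {g : ℕ} {U : ℕ → Finset ℕ} {m d n : ℕ}

theorem digits_of_mem_digitBlock (hg : 1 < g) (hd : d < g) (hd0 : d ≠ 0)
    (hn : n ∈ digitBlock g U m d) :
    ∃ c : Fin m → ℕ, (∀ i, c i < g ∧ c i ∉ U i) ∧ Nat.digits g n = List.ofFn c ++ [d] := by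
  obtain ⟨c, hc, rfl⟩ := mem_image.1 hn
  have hc' : ∀ i, c i < g ∧ c i ∉ U i := fun i => by
    simpa using Fintype.mem_piFinset.1 hc i
  exact ⟨c, hc', Nat.digits_ofDigits_ofFn_append hg hd hd0 fun i => (hc' i).1⟩

theorem length_digits_of_mem_digitBlock (hg : 1 < g) (hd : d < g) (hd0 : d ≠ 0)
    (hn : n ∈ digitBlock g U m d) : (Nat.digits g n).length = m + 1 := by
  obtain ⟨c, -, hdig⟩ := digits_of_mem_digitBlock hg hd hd0 hn
  simp [hdig]

theorem pos_of_mem_digitBlock (hg : 1 < g) (hd : d < g) (hd0 : d ≠ 0)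
    (hn : n ∈ digitBlock g U m d) : 0 < n := by
  obtain ⟨c, -, hdig⟩ := digits_of_mem_digitBlock hg hd hd0 hn
  exact Nat.pos_of_ne_zero fun h => by simp [h] at hdig

theorem hasAllowedDigits_of_mem_digitBlock (hg : 1 < g) (hd : d < g) (hd0 : d ≠ 0)
    (hdU : d ∉ U m) (hn : n ∈ digitBlock g U m d) : HasAllowedDigits g U n := by
  obtain ⟨c, hc, hdig⟩ := digits_of_mem_digitBlock hg hd hd0 hn
  refine ⟨pos_of_mem_digitBlock hg hd hd0 hn, fun i hi => ?_⟩
  rw [hdig] at hi ⊢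
  rw [List.getD_eq_getElem _ _ hi]
  rcases lt_or_eq_of_le (Nat.lt_succ_iff.1 (by simpa using hi)) with hi | rfl
  · rw [List.getElem_append_left (by simpa using hi), List.getElem_ofFn]
    exact (hc ⟨i, hi⟩).2
  · simpa using hdU

theorem lt_pow_of_mem_digitBlock (hg : 1 < g) (hd : d < g) (hd0 : d ≠ 0)
    (hn : n ∈ digitBlock g U m d) : n < g ^ (m + 1) := by
  rw [← length_digits_of_mem_digitBlock hg hd hd0 hn]
  exact Nat.lt_base_pow_length_digits hg

theorem card_digitBlock (hg : 1 < g) (hU : ∀ i, U i ⊆ range g) (hd : d < g) (hd0 : d ≠ 0) :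
    #(digitBlock g U m d) = ∏ i ∈ range m, (g - #(U i)) := by
  rw [digitBlock, card_image_of_injOn, Fintype.card_piFinset, ← Fin.prod_univ_eq_prod_range]
  · simp only [card_sdiff_of_subset (hU _), card_range]
  intro c hc c' hc' h
  have hdig := congrArg (Nat.digits g) h
  simp only at hdig
  have hlt : ∀ c ∈ (Fintype.piFinset fun i : Fin m => range g \ U i : Set (Fin m → ℕ)),
      ∀ i, c i < g := fun c hc i => by
    simpa using (mem_sdiff.1 (Fintype.mem_piFinset.1 (mem_coe.1 hc) i)).1
  rw [Nat.digits_ofDigits_ofFn_append hg hd hd0 (hlt c hc),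
    Nat.digits_ofDigits_ofFn_append hg hd hd0 (hlt c' hc')] at hdig
  exact List.ofFn_injective (List.append_cancel_right hdig)

theorem card_mul_le_sum_digitBlock_rpow (hg : 1 < g) (hd : d < g) (hd0 : d ≠ 0) {σ : ℝ}
    (hσ : 0 ≤ σ) :
    #(digitBlock g U m d) * ((g : ℝ) ^ (m + 1)) ^ (-σ) ≤
      ∑ n ∈ digitBlock g U m d, (n : ℝ) ^ (-σ) := by
  rw [← nsmul_eq_mul]
  refine card_nsmul_le_sum _ _ _ fun n hn => rpow_le_rpow_of_nonpos ?_ ?_ (by linarith)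
  · exact Nat.cast_pos.2 (pos_of_mem_digitBlock hg hd hd0 hn)
  · exact_mod_cast (lt_pow_of_mem_digitBlock hg hd hd0 hn).le

theorem exp_div_le_sum_digitBlock_rpow (hg : 1 < g) (hU : ∀ i, U i ⊂ range g) (hd : d < g)
    (hd0 : d ≠ 0) {α : ℕ → ℝ} {β σ : ℝ} (hσ0 : 0 ≤ σ)
    (hσ : σ * log g = ∑ k ∈ range g, α k * log (g - k))
    (hcount : ∀ k < g, α k * (m + 1 : ℕ) - β ≤ #{i ∈ range (m + 1) | #(U i) = k}) :
    exp (-(β * ∑ k ∈ range g, log (g - k))) / g ≤ ∑ n ∈ digitBlock g U m d, (n : ℝ) ^ (-σ) := by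
  set C := ∑ k ∈ range g, log ((g : ℝ) - k)
  set L := ((m + 1 : ℕ) : ℝ) * (σ * log g) with hL
  have hcardU : ∀ i, #(U i) < g := fun i => by simpa using card_lt_card (hU i)
  have hprod : exp (L - β * C) ≤ ∏ i ∈ range (m + 1), ((g - #(U i) : ℕ) : ℝ) := by
    rw [hL, hσ]
    exact exp_le_prod_range_sub (fun i _ => hcardU i) hcount
  have hblock : ∏ i ∈ range (m + 1), ((g - #(U i) : ℕ) : ℝ) ≤ g * #(digitBlock g U m d) := by
    rw [card_digitBlock hg (fun i => (hU i).subset) hd hd0, prod_range_succ, mul_comm,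
      Nat.cast_prod]
    exact mul_le_mul_of_nonneg_right (by exact_mod_cast Nat.sub_le _ _) (by positivity)
  have hpow : ((g : ℝ) ^ (m + 1)) ^ (-σ) = exp (-L) := by
    rw [rpow_def_of_pos (by positivity), log_pow, hL]
    push_cast
    ring_nf
  calc exp (-(β * C)) / g = exp (L - β * C) * exp (-L) / g := by rw [← exp_add]; ring_nf
    _ ≤ g * #(digitBlock g U m d) * exp (-L) / g := by gcongr; exact hprod.trans hblock
    _ = #(digitBlock g U m d) * ((g : ℝ) ^ (m + 1)) ^ (-σ) := by
      rw [hpow]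
      field_simp
    _ ≤ _ := card_mul_le_sum_digitBlock_rpow hg hd hd0 hσ0

end digitBlock

theorem variable_missing_digits_diverges_critical_general (g : ℕ) (hg : 2 ≤ g)
    (U : ℕ → Finset ℕ) (hU : ∀ i, U i ⊂ Finset.range g)
    (hM : {m : ℕ | 0 < m ∧ U (m - 1) ≠ Finset.Icc 1 (g - 1)}.Infinite)
    (α : ℕ → ℝ) (hα : ∀ k < g, 0 ≤ α k) (β : ℝ)
    (hε : ∀ k < g, ∀ m : ℕ,
      |(((Finset.range m).filter (fun i => (U i).card = k)).card : ℝ) - α k * m| < β) :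
    ¬ Summable (fun a : {n : ℕ // 0 < n ∧
        ∀ i < (Nat.digits g n).length, (Nat.digits g n).getD i 0 ∉ U i} =>
      ((a : ℕ) : ℝ) ^
        (-((∑ k ∈ Finset.range g, α k * Real.log (g - k)) / Real.log g))) := by
  set σ := (∑ k ∈ range g, α k * log (g - k)) / log g
  have hlogg : 0 < log g := log_pos (by exact_mod_cast hg)
  have hσ0 : 0 ≤ σ := by
    refine div_nonneg (sum_nonneg fun k hk => mul_nonneg (hα k (mem_range.1 hk)) ?_) hlogg.le
    have : (k : ℝ) + 1 ≤ g := by exact_mod_cast mem_range.1 hk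
    exact log_nonneg (by linarith)
  choose! d hdg hd0 hdU using fun m (hm : m ∈ {m : ℕ | 0 < m ∧ U (m - 1) ≠ Icc 1 (g - 1)}) =>
    exists_ne_zero_notMem_of_ssubset_range (hU (m - 1)) hm.2
  refine not_summable_subtype_of_pairwiseDisjoint (fun n : ℕ => rpow_nonneg n.cast_nonneg (-σ))
    hM (B := fun m => digitBlock g U (m - 1) (d m)) (fun m hm n hn => ?_) ?_
    (c := exp (-(β * ∑ k ∈ range g, log ((g : ℝ) - k))) / g) (by positivity) fun m hm => ?_
  · exact hasAllowedDigits_of_mem_digitBlock hg (hdg m hm) (hd0 m hm) (hdU m hm) hn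
  · intro m hm m' hm' hne
    refine disjoint_left.2 fun n hn hn' => hne ?_
    have := length_digits_of_mem_digitBlock hg (hdg m hm) (hd0 m hm) hn
    have := length_digits_of_mem_digitBlock hg (hdg m' hm') (hd0 m' hm') hn'
    have := hm.1; have := hm'.1
    omega
  · obtain ⟨m, rfl⟩ : ∃ m', m = m' + 1 := ⟨m - 1, by have := hm.1; omega⟩
    rw [Nat.add_sub_cancel]
    refine exp_div_le_sum_digitBlock_rpow hg hU (hdg _ hm) (hd0 _ hm) hσ0
      (div_mul_cancel₀ _ hlogg.ne') fun k hk => ?_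
    linarith [(abs_lt.1 (hε k hk (m + 1))).1]

/-- With 𝓜 infinite and uniformly bounded error terms |ε_k(m)| < β, the series
∑ a^{-σ_c} over A_{g,𝒰} diverges at the critical exponent
σ_c = (1/log g) ∑_k α_k log(g-k). -/
theorem variable_missing_digits_diverges_critical (g : ℕ) (hg : 2 ≤ g)
    (U : ℕ → Finset ℕ) (hU : ∀ i, U i ⊂ Finset.range g)
    (hM : {m : ℕ | 0 < m ∧ U (m - 1) ≠ Finset.Icc 1 (g - 1)}.Infinite)
    (α : ℕ → ℝ) (hα : ∀ k < g, 0 ≤ α k) (β : ℝ) (hβ : 0 < β)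
    (hε : ∀ k < g, ∀ m : ℕ,
      |(((Finset.range m).filter (fun i => (U i).card = k)).card : ℝ) - α k * m| < β) :
    ¬ Summable (fun a : {n : ℕ // 0 < n ∧
        ∀ i < (Nat.digits g n).length, (Nat.digits g n).getD i 0 ∉ U i} =>
      ((a : ℕ) : ℝ) ^
        (-((∑ k ∈ Finset.range g, α k * Real.log (g - k)) / Real.log g))) :=
  variable_missing_digits_diverges_critical_general g hg U hU hM α hα β hε
end

section
/- Let g ≥ 2 and let (U_i) be proper subsets of [0,g-1]. The set A_{g,𝒰} of positive integers with base-g digits avoiding each U_i at position i is infinite if and only if the set {m ≥ 1 : U_{m-1} ≠ [1,g-1]} is infinite. -/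
/-!
Group the elements of `A_{g,𝒰}` by their number of base-`g` digits `m`. Each class is finite
(its elements are `< g ^ m`), so `A_{g,𝒰}` is infinite iff infinitely many lengths occur.
A length `m ≥ 1` occurs iff some leading digit in `[1, g-1]` avoids `U_{m-1}`: the lower digits
can always be chosen, since every `U_i` misses some digit. As `U_{m-1} ⊊ [0, g-1]`, this fails
exactly when `U_{m-1} = [1, g-1]`.
-/

lemma Set.infinite_iff_infinite_image_of_finite_fibers {α β : Type*} {f : α → β} {s : Set α}
    (hf : ∀ b, (f ⁻¹' {b}).Finite) : s.Infinite ↔ (f '' s).Infinite :=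
  ⟨fun hs himage => hs (himage.of_finite_fibers f fun b _ => (hf b).inter_of_right s),
    Set.Infinite.of_image f⟩

lemma Nat.finite_setOf_digits_length_eq {b : ℕ} (hb : 1 < b) (m : ℕ) :
    {n : ℕ | (Nat.digits b n).length = m}.Finite :=
  (Set.finite_Iio (b ^ m)).subset fun _ hn => hn ▸ Nat.lt_base_pow_length_digits hb

lemma Nat.exists_digits_eq_map_range {b : ℕ} (hb : 1 < b) (m : ℕ) (c : ℕ → ℕ)
    (hc : ∀ i < m, c i < b) (hlast : c (m - 1) ≠ 0) :
    ∃ n, Nat.digits b n = (List.range m).map c := by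
  refine ⟨Nat.ofDigits b ((List.range m).map c), Nat.digits_ofDigits b hb _ ?_ ?_⟩
  · simpa using hc
  · intro _
    simpa [List.getLast_map, List.getLast_range] using hlast

lemma Finset.exists_mem_Icc_notMem_of_ssubset_range {g : ℕ} {U : Finset ℕ}
    (hU : U ⊂ Finset.range g) (hne : U ≠ Finset.Icc 1 (g - 1)) :
    ∃ e ∈ Finset.Icc 1 (g - 1), e ∉ U := by
  by_contra! hIcc
  by_cases h0 : 0 ∈ U
  · refine hU.not_subset fun x hx => ?_
    rcases Nat.eq_zero_or_pos x with rfl | hx0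
    · exact h0
    · exact hIcc x (by simp at hx ⊢; omega)
  · refine hne (Finset.Subset.antisymm (fun u hu => ?_) hIcc)
    have := Finset.mem_range.mp (hU.subset hu)
    have : u ≠ 0 := fun h => h0 (h ▸ hu)
    simp only [Finset.mem_Icc]
    omega

def missingDigitSet (g : ℕ) (U : ℕ → Finset ℕ) : Set ℕ :=
  {n | 0 < n ∧ ∀ i < (Nat.digits g n).length, (Nat.digits g n).getD i 0 ∉ U i}

section MissingDigits

variable {g : ℕ} {U : ℕ → Finset ℕ}

lemma digits_length_mem_of_mem_missingDigitSet (hg : 1 < g) {n : ℕ}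
    (hn : n ∈ missingDigitSet g U) :
    0 < (Nat.digits g n).length ∧
      U ((Nat.digits g n).length - 1) ≠ Finset.Icc 1 (g - 1) := by
  obtain ⟨hn0, havoid⟩ := hn
  have hne : Nat.digits g n ≠ [] := Nat.digits_ne_nil_iff_ne_zero.mpr hn0.ne'
  have hlen : 0 < (Nat.digits g n).length := List.length_pos_iff.mpr hne
  refine ⟨hlen, fun hU => havoid _ (Nat.sub_lt hlen one_pos) ?_⟩
  have hlast_ne := Nat.getLast_digit_ne_zero g hn0.ne'
  have hlast_lt := Nat.digits_lt_base hg (List.getLast_mem hne)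
  rw [List.getD_eq_getElem _ _ (Nat.sub_lt hlen one_pos), ← List.getLast_eq_getElem hne, hU,
    Finset.mem_Icc]
  exact ⟨Nat.one_le_iff_ne_zero.mpr hlast_ne, Nat.le_sub_one_of_lt hlast_lt⟩

lemma exists_mem_missingDigitSet_digits_length_eq (hg : 1 < g) (hU : ∀ i, U i ⊂ Finset.range g)
    {m : ℕ} (hm : 0 < m) (hne : U (m - 1) ≠ Finset.Icc 1 (g - 1)) :
    ∃ n ∈ missingDigitSet g U, (Nat.digits g n).length = m := by
  choose d hd_lt hd_notMem using fun i => Finset.exists_of_ssubset (hU i)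
  obtain ⟨e, he, he_notMem⟩ := Finset.exists_mem_Icc_notMem_of_ssubset_range (hU (m - 1)) hne
  obtain ⟨he_pos, he_le⟩ := Finset.mem_Icc.mp he
  set c := Function.update d (m - 1) e
  have hc_lt : ∀ i, c i < g := by
    intro i
    rcases eq_or_ne i (m - 1) with rfl | hi
    · simpa [c] using Nat.lt_of_le_sub_one (by omega) he_le
    · simpa [c, hi] using hd_lt i
  have hc_notMem : ∀ i, c i ∉ U i := by
    intro i
    rcases eq_or_ne i (m - 1) with rfl | hi
    · simpa [c] using he_notMem
    · simpa [c, hi] using hd_notMem i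
  obtain ⟨n, hn⟩ := Nat.exists_digits_eq_map_range hg m c (fun i _ => hc_lt i)
    (by simpa [c] using Nat.one_le_iff_ne_zero.mp he_pos)
  have hlen : (Nat.digits g n).length = m := by simp [hn]
  refine ⟨n, ⟨Nat.pos_of_ne_zero fun h => ?_, fun i hi => ?_⟩, hlen⟩
  · exact hm.ne' (by simpa [h] using hlen.symm)
  · rw [hn, List.getD_eq_getElem _ _ (by simpa [hn] using hi)]
    simpa using hc_notMem i

lemma digits_length_image_missingDigitSet (hg : 1 < g) (hU : ∀ i, U i ⊂ Finset.range g) :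
    (fun n => (Nat.digits g n).length) '' missingDigitSet g U =
      {m | 0 < m ∧ U (m - 1) ≠ Finset.Icc 1 (g - 1)} := by
  ext m
  constructor
  · rintro ⟨n, hn, rfl⟩
    exact digits_length_mem_of_mem_missingDigitSet hg hn
  · rintro ⟨hm, hne⟩
    exact exists_mem_missingDigitSet_digits_length_eq hg hU hm hne

end MissingDigits

/-- A_{g,𝒰} is infinite iff the set 𝓜 = {m ≥ 1 : U_{m-1} ≠ [1,g-1]} is infinite. -/
theorem variable_missing_digits_infinite_iff (g : ℕ) (hg : 2 ≤ g)
    (U : ℕ → Finset ℕ) (hU : ∀ i, U i ⊂ Finset.range g) :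
    {n : ℕ | 0 < n ∧
        ∀ i < (Nat.digits g n).length, (Nat.digits g n).getD i 0 ∉ U i}.Infinite ↔
      {m : ℕ | 0 < m ∧ U (m - 1) ≠ Finset.Icc 1 (g - 1)}.Infinite := by
  rw [← digits_length_image_missingDigitSet hg hU]
  exact Set.infinite_iff_infinite_image_of_finite_fibers (Nat.finite_setOf_digits_length_eq hg)
end
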